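/- arXiv:1604.07483 — 5 statements merged into one kernel-verified Lean document; each statement's English description precedes it below -/
import Mathlib

section
/- Let ρ(l) = l - 5al³ + 10a²l⁵ with a > 0. The quantity ρ(l)ρ'''(l) - ρ'(l)ρ''(l) equals 100a²l³(1 + 12al² - 40a²l⁴), and this is strictly positive for all l in the interval (0, 1/√(5a)]. -/
/-!
Differentiating the odd quintic `l + b l³ + c l⁵` three times and expanding gives
`ρ ρ''' - ρ' ρ'' = l³ (40c - 12b² - 24bc l² - 40c² l⁴)`, which for `b = -5a`, `c = 10a²` is the
stated formula. With `t = a l² ∈ (0, 1/5]` the last factor is `1 + 12t - 40t² ≥ 1 - 40t² > 0`.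
-/

namespace OddQuintic

variable (b c : ℝ)

theorem deriv_eq :
    deriv (fun l : ℝ => l + b * l ^ 3 + c * l ^ 5) = fun l => 1 + 3 * b * l ^ 2 + 5 * c * l ^ 4 := by
  funext l
  exact (((hasDerivAt_id l).add ((hasDerivAt_pow 3 l).const_mul b)).add
    ((hasDerivAt_pow 5 l).const_mul c)).deriv.trans (by simp; ring)

theorem iteratedDeriv_two_eq :
    iteratedDeriv 2 (fun l : ℝ => l + b * l ^ 3 + c * l ^ 5) =
      fun l => 6 * b * l + 20 * c * l ^ 3 := by
  rw [iteratedDeriv_eq_iterate, Function.iterate_succ_apply', Function.iterate_one, deriv_eq]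
  funext l
  exact (((hasDerivAt_const l (1 : ℝ)).add ((hasDerivAt_pow 2 l).const_mul (3 * b))).add
    ((hasDerivAt_pow 4 l).const_mul (5 * c))).deriv.trans (by simp; ring)

theorem iteratedDeriv_three_eq :
    iteratedDeriv 3 (fun l : ℝ => l + b * l ^ 3 + c * l ^ 5) =
      fun l => 6 * b + 60 * c * l ^ 2 := by
  rw [iteratedDeriv_succ, iteratedDeriv_two_eq]
  funext l
  exact (((hasDerivAt_id l).const_mul (6 * b)).add
    ((hasDerivAt_pow 3 l).const_mul (20 * c))).deriv.trans (by simp; ring)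

theorem wronskian_eq (l : ℝ) :
    let ρ : ℝ → ℝ := fun l => l + b * l ^ 3 + c * l ^ 5
    ρ l * iteratedDeriv 3 ρ l - deriv ρ l * iteratedDeriv 2 ρ l =
      l ^ 3 * (40 * c - 12 * b ^ 2 - 24 * b * c * l ^ 2 - 40 * c ^ 2 * l ^ 4) := by
  simp only [deriv_eq, iteratedDeriv_two_eq, iteratedDeriv_three_eq]
  ring

end OddQuintic

theorem mul_sq_le_one_of_le_one_div_sqrt {c l : ℝ} (hc : 0 < c) (hl₀ : 0 ≤ l)
    (hl : l ≤ 1 / √c) : c * l ^ 2 ≤ 1 := by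
  have hsq : l ^ 2 ≤ 1 / c := by
    simpa [div_pow, Real.sq_sqrt hc.le] using pow_le_pow_left₀ hl₀ hl 2
  calc c * l ^ 2 ≤ c * (1 / c) := by gcongr
    _ = 1 := by field_simp

theorem one_add_twelve_mul_sub_forty_mul_sq_pos {t : ℝ} (ht₀ : 0 ≤ t) (ht : t ≤ 1 / 5) :
    0 < 1 + 12 * t - 40 * t ^ 2 := by
  nlinarith

/-- For `ρ(l) = l - 5al³ + 10a²l⁵` with `a > 0`, one has
`ρ ρ''' - ρ' ρ'' = 100a²l³(1 + 12al² - 40a²l⁴)`, and this quantity is strictly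
positive on `(0, 1/√(5a)]`. -/
theorem stmt1 (a : ℝ) (ha : 0 < a) :
    let ρ : ℝ → ℝ := fun l => l - 5 * a * l ^ 3 + 10 * a ^ 2 * l ^ 5
    (∀ l : ℝ, ρ l * iteratedDeriv 3 ρ l - deriv ρ l * iteratedDeriv 2 ρ l
        = 100 * a ^ 2 * l ^ 3 * (1 + 12 * a * l ^ 2 - 40 * a ^ 2 * l ^ 4)) ∧
    (∀ l ∈ Set.Ioc (0 : ℝ) (1 / Real.sqrt (5 * a)),
        0 < ρ l * iteratedDeriv 3 ρ l - deriv ρ l * iteratedDeriv 2 ρ l) := by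
  intro ρ
  have hρ : ρ = fun l => l + (-5 * a) * l ^ 3 + (10 * a ^ 2) * l ^ 5 := by
    funext l; simp only [ρ]; ring
  have hformula : ∀ l : ℝ, ρ l * iteratedDeriv 3 ρ l - deriv ρ l * iteratedDeriv 2 ρ l
      = 100 * a ^ 2 * l ^ 3 * (1 + 12 * a * l ^ 2 - 40 * a ^ 2 * l ^ 4) := by
    intro l
    rw [hρ, OddQuintic.wronskian_eq]
    ring
  refine ⟨hformula, fun l ⟨hl₀, hl⟩ => ?_⟩
  have ht : 5 * a * l ^ 2 ≤ 1 := mul_sq_le_one_of_le_one_div_sqrt (by positivity) hl₀.le hl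
  rw [hformula]
  refine mul_pos (by positivity) ?_
  linarith [one_add_twelve_mul_sub_forty_mul_sq_pos (t := a * l ^ 2) (by positivity)
    (by linarith)]
end

section
/- Let ρ(l) = l - 5al³ + 10a²l⁵ with a > 0, and define K(l) = -ρ''(l)/ρ(l) for l > 0. Then K(l) > 0 for 0 < l ≤ 1/√(10a) and K(1/√(5a)) < 0. -/
lemma rho_deriv2 (a : ℝ) :
    iteratedDeriv 2 (fun l : ℝ => l - 5 * a * l ^ 3 + 10 * a ^ 2 * l ^ 5) =
      fun l => -30 * a * l + 200 * a ^ 2 * l ^ 3 := by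
  have h1 : deriv (fun l : ℝ => l - 5 * a * l ^ 3 + 10 * a ^ 2 * l ^ 5) =
      fun l => 1 - 15 * a * l ^ 2 + 50 * a ^ 2 * l ^ 4 := by
    funext l
    have h : HasDerivAt (fun l : ℝ => l - 5 * a * l ^ 3 + 10 * a ^ 2 * l ^ 5)
        (1 - 5 * a * ((3:ℕ) * l ^ 2) + 10 * a ^ 2 * ((5:ℕ) * l ^ 4)) l := by
      exact ((hasDerivAt_id l).sub (((hasDerivAt_pow 3 l).const_mul (5*a)))).add
        ((hasDerivAt_pow 5 l).const_mul (10*a^2))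
    rw [h.deriv]; push_cast; ring
  have h2 : deriv (fun l : ℝ => 1 - 15 * a * l ^ 2 + 50 * a ^ 2 * l ^ 4) =
      fun l => -30 * a * l + 200 * a ^ 2 * l ^ 3 := by
    funext l
    have h : HasDerivAt (fun l : ℝ => 1 - 15 * a * l ^ 2 + 50 * a ^ 2 * l ^ 4)
        (0 - 15 * a * ((2:ℕ) * l ^ 1) + 50 * a ^ 2 * ((4:ℕ) * l ^ 3)) l := by
      exact ((hasDerivAt_const l (1:ℝ)).sub (((hasDerivAt_pow 2 l).const_mul (15*a)))).add
        ((hasDerivAt_pow 4 l).const_mul (50*a^2))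
    rw [h.deriv]; push_cast; ring
  rw [show (2:ℕ) = 1 + 1 from rfl, iteratedDeriv_succ, iteratedDeriv_one, h1, h2]

/-- For `ρ(l) = l - 5al³ + 10a²l⁵` with `a > 0` and `K(l) = -ρ''(l)/ρ(l)`,
the curvature `K` is positive on `(0, 1/√(10a)]` and negative at `1/√(5a)`. -/
theorem stmt2 (a : ℝ) (ha : 0 < a) :
    let ρ : ℝ → ℝ := fun l => l - 5 * a * l ^ 3 + 10 * a ^ 2 * l ^ 5
    let K : ℝ → ℝ := fun l => -(iteratedDeriv 2 ρ l) / ρ l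
    (∀ l ∈ Set.Ioc (0 : ℝ) (1 / Real.sqrt (10 * a)), 0 < K l) ∧
    K (1 / Real.sqrt (5 * a)) < 0 := by
  intro ρ K
  have hK : ∀ l, K l = -(-30 * a * l + 200 * a ^ 2 * l ^ 3) / (l - 5 * a * l ^ 3 + 10 * a ^ 2 * l ^ 5) := by
    intro l
    simp only [K, ρ, rho_deriv2 a]
  -- ρ positive for l > 0
  have hρpos : ∀ l : ℝ, 0 < l → 0 < l - 5 * a * l ^ 3 + 10 * a ^ 2 * l ^ 5 := by
    intro l hl
    nlinarith [mul_nonneg (sq_nonneg (a * l ^ 2 - 1 / 4)) hl.le, hl]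
  constructor
  · rintro l ⟨hl0, hl1⟩
    rw [hK l]
    apply div_pos
    · -- numerator: 30 a l - 200 a² l³ > 0 since 20 a l² ≤ 2
      have hsq : (0:ℝ) < Real.sqrt (10 * a) := Real.sqrt_pos.mpr (by positivity)
      have h1 : l * Real.sqrt (10 * a) ≤ 1 := by
        rw [le_div_iff₀ hsq] at hl1; linarith
      have h2 : l ^ 2 * (10 * a) ≤ 1 := by
        have e : l ^ 2 * (10 * a) = (l * Real.sqrt (10 * a)) ^ 2 := by
          rw [mul_pow, Real.sq_sqrt (by positivity : (0:ℝ) ≤ 10 * a)]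
        rw [e]; nlinarith [mul_pos hl0 hsq]
      nlinarith [mul_pos ha hl0]
    · exact hρpos l hl0
  · have h5a : (0:ℝ) < 5 * a := by linarith
    have hsq : (0:ℝ) < Real.sqrt (5 * a) := Real.sqrt_pos.mpr h5a
    set l := 1 / Real.sqrt (5 * a) with hl
    have hl0 : 0 < l := by positivity
    have hl2 : l ^ 2 = 1 / (5 * a) := by
      rw [hl, div_pow, one_pow, Real.sq_sqrt h5a.le]
    rw [hK l]
    apply div_neg_of_neg_of_pos
    · have hnum : -30 * a * l + 200 * a ^ 2 * l ^ 3 = 10 * a * l := by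
        have : l ^ 3 = l * l ^ 2 := by ring
        rw [this, hl2]; field_simp; ring
      rw [hnum]; nlinarith [mul_pos (mul_pos (by norm_num : (0:ℝ)<10) ha) hl0]
    · exact hρpos l hl0
end

section
/- Let ρ(l) = l - 5al³ + 10a²l⁵ with a > 0 and K(l) = -ρ''(l)/ρ(l). Then K is strictly decreasing on (0, 1/√(5a)]; equivalently K'(l) < 0 on that interval. -/
/-!
Writing `t = a l²`, one has `ρ(l) = l (10 (t - 1/4)² + 3/8) > 0` for `l > 0`, and the
numerator `ρ' ρ'' - ρ ρ'''` of `K'` factors as `100 a² l³ (40 t² - 12 t - 1)`.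
On `(0, 1/√(5a)]` we have `0 < t ≤ 1/5`, where `40 t² ≤ 8 t`, so the quadratic factor is
at most `-4t - 1 < 0`.
-/

open Set

namespace QuinticProfile

def rho (a l : ℝ) : ℝ := l - 5 * a * l ^ 3 + 10 * a ^ 2 * l ^ 5

noncomputable def curvature (a l : ℝ) : ℝ := -iteratedDeriv 2 (rho a) l / rho a l

variable {a l : ℝ}

theorem rho_pos (hl : 0 < l) : 0 < rho a l := by
  have h : rho a l = l * (10 * (a * l ^ 2 - 1 / 4) ^ 2 + 3 / 8) := by unfold rho; ring
  rw [h]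
  positivity

theorem hasDerivAt_rho (a l : ℝ) :
    HasDerivAt (rho a) (1 - 15 * a * l ^ 2 + 50 * a ^ 2 * l ^ 4) l := by
  refine (((hasDerivAt_id' l).sub ((hasDerivAt_pow 3 l).const_mul (5 * a))).add
    ((hasDerivAt_pow 5 l).const_mul (10 * a ^ 2))).congr_deriv ?_
  push_cast; ring

theorem iteratedDeriv_two_rho (a l : ℝ) :
    iteratedDeriv 2 (rho a) l = -30 * a * l + 200 * a ^ 2 * l ^ 3 := by
  have hderiv : deriv (rho a) = fun x => 1 - 15 * a * x ^ 2 + 50 * a ^ 2 * x ^ 4 :=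
    funext fun x => (hasDerivAt_rho a x).deriv
  have h : HasDerivAt (fun x => 1 - 15 * a * x ^ 2 + 50 * a ^ 2 * x ^ 4)
      (-30 * a * l + 200 * a ^ 2 * l ^ 3) l :=
    ((((hasDerivAt_pow 2 l).const_mul (15 * a)).const_sub 1).add
      ((hasDerivAt_pow 4 l).const_mul (50 * a ^ 2))).congr_deriv (by push_cast; ring)
  rw [iteratedDeriv_succ, iteratedDeriv_one, hderiv, h.deriv]

theorem curvature_eq (a : ℝ) :
    curvature a = fun l => (30 * a * l - 200 * a ^ 2 * l ^ 3) / rho a l := by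
  ext l
  rw [curvature, iteratedDeriv_two_rho, neg_add, neg_mul, neg_mul, neg_neg]
  ring

theorem hasDerivAt_curvature (hl : rho a l ≠ 0) :
    HasDerivAt (curvature a)
      (100 * a ^ 2 * l ^ 3 * (40 * (a * l ^ 2) ^ 2 - 12 * (a * l ^ 2) - 1) / rho a l ^ 2) l := by
  have hnum : HasDerivAt (fun x => 30 * a * x - 200 * a ^ 2 * x ^ 3)
      (30 * a - 600 * a ^ 2 * l ^ 2) l :=
    (((hasDerivAt_id' l).const_mul (30 * a)).sub
      ((hasDerivAt_pow 3 l).const_mul (200 * a ^ 2))).congr_deriv (by push_cast; ring)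
  rw [curvature_eq]
  refine (hnum.div (hasDerivAt_rho a l) hl).congr_deriv ?_
  simp only [rho]
  ring

theorem quadratic_neg_of_le {t : ℝ} (ht0 : 0 ≤ t) (ht : t ≤ 1 / 5) :
    40 * t ^ 2 - 12 * t - 1 < 0 := by
  nlinarith

theorem mul_sq_le_of_mem_Ioc (ha : 0 < a) (hl : l ∈ Ioc 0 (1 / √(5 * a))) :
    a * l ^ 2 ≤ 1 / 5 := by
  have h5a : 0 < 5 * a := by positivity
  have hsq : l ^ 2 ≤ 1 / (5 * a) := by
    calc l ^ 2 ≤ (1 / √(5 * a)) ^ 2 := pow_le_pow_left₀ hl.1.le hl.2 2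
      _ = 1 / (5 * a) := by rw [div_pow, one_pow, Real.sq_sqrt h5a.le]
  rw [le_div_iff₀ h5a] at hsq
  linarith

theorem deriv_curvature_neg (ha : 0 < a) (hl : l ∈ Ioc 0 (1 / √(5 * a))) :
    deriv (curvature a) l < 0 := by
  have hl0 := hl.1
  rw [(hasDerivAt_curvature (rho_pos hl0).ne').deriv]
  refine div_neg_of_neg_of_pos (mul_neg_of_pos_of_neg (by positivity) ?_)
    (pow_pos (rho_pos hl0) 2)
  exact quadratic_neg_of_le (by positivity) (mul_sq_le_of_mem_Ioc ha hl)

end QuinticProfile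

open QuinticProfile in
/-- For `ρ(l) = l - 5al³ + 10a²l⁵` with `a > 0` and `K(l) = -ρ''(l)/ρ(l)`,
the curvature `K` is strictly decreasing on `(0, 1/√(5a)]`; equivalently
`K'(l) < 0` there. -/
theorem stmt3 (a : ℝ) (ha : 0 < a) :
    let ρ : ℝ → ℝ := fun l => l - 5 * a * l ^ 3 + 10 * a ^ 2 * l ^ 5
    let K : ℝ → ℝ := fun l => -(iteratedDeriv 2 ρ l) / ρ l
    StrictAntiOn K (Set.Ioc (0 : ℝ) (1 / Real.sqrt (5 * a))) ∧
    (∀ l ∈ Set.Ioc (0 : ℝ) (1 / Real.sqrt (5 * a)), deriv K l < 0) := by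
  show StrictAntiOn (curvature a) _ ∧ ∀ l ∈ _, deriv (curvature a) l < 0
  refine ⟨strictAntiOn_of_deriv_neg (convex_Ioc 0 _) ?_ ?_, fun l hl => deriv_curvature_neg ha hl⟩
  · rw [curvature_eq]
    exact ContinuousOn.div (by fun_prop) (by unfold rho; fun_prop)
      fun x hx => (rho_pos hx.1).ne'
  · intro l hl
    rw [interior_Ioc] at hl
    exact deriv_curvature_neg ha ⟨hl.1, hl.2.le⟩
end

section
/- Let ρ(l) = l - 5al³ + 10a²l⁵ extended so that ρ' ≡ 1 for l ≥ 1/(2√a) and ρ' > 0 on (1/√(5a), 1/(2√a)) with ρ ≤ l throughout. Then sup_{s ≥ 0} (s - ρ(s)) < 1/(3√a). -/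
/-! The deficit `g(l) = l - ρ(l)` is nondecreasing on `[0, 1/(2√a)]`, because `ρ' ≤ 1` there
(on the polynomial piece `1 - ρ' = 5al²(3 - 10al²) ≥ 0`), and constant afterwards, so its
supremum is `g(1/(2√a))`. Since `ρ` increases on the middle piece, this is at most
`1/(2√a) - ρ(1/√(5a)) = 1/(2√a) - 2/(5√(5a))`, which is below `1/(3√a)` because
`5√5 < 12`. -/

open Set

section Deficit

variable {f : ℝ → ℝ} {D : Set ℝ}

theorem monotoneOn_id_sub_of_deriv_le_one (hD : Convex ℝ D) (hf : ContinuousOn f D)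
    (hf' : DifferentiableOn ℝ f (interior D)) (h : ∀ x ∈ interior D, deriv f x ≤ 1) :
    MonotoneOn (fun x => x - f x) D := by
  refine monotoneOn_of_deriv_nonneg hD (continuousOn_id.sub hf)
    (differentiableOn_id.sub hf') fun x hx => ?_
  have hfx := (hf' x hx).differentiableAt (isOpen_interior.mem_nhds hx)
  rw [deriv_fun_sub (f := fun y => y) differentiableAt_id hfx, deriv_id'']
  linarith [h x hx]

theorem antitoneOn_id_sub_of_one_le_deriv (hD : Convex ℝ D) (hf : ContinuousOn f D)
    (hf' : DifferentiableOn ℝ f (interior D)) (h : ∀ x ∈ interior D, 1 ≤ deriv f x) :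
    AntitoneOn (fun x => x - f x) D := by
  refine antitoneOn_of_deriv_nonpos hD (continuousOn_id.sub hf)
    (differentiableOn_id.sub hf') fun x hx => ?_
  have hfx := (hf' x hx).differentiableAt (isOpen_interior.mem_nhds hx)
  rw [deriv_fun_sub (f := fun y => y) differentiableAt_id hfx, deriv_id'']
  linarith [h x hx]

end Deficit

theorem isMaxOn_Ici_of_monotoneOn_Icc_of_antitoneOn_Ici {α β : Type*} [LinearOrder α]
    [Preorder β] {g : α → β} {x b : α} (hxb : x ≤ b) (h₁ : MonotoneOn g (Icc x b))
    (h₂ : AntitoneOn g (Ici b)) : IsMaxOn g (Ici x) b := by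
  intro s (hs : x ≤ s)
  rcases le_total s b with hsb | hbs
  · exact h₁ ⟨hs, hsb⟩ ⟨hxb, le_rfl⟩ hsb
  · exact h₂ (le_refl b) hbs hbs

section Quintic

variable (a : ℝ)

theorem hasDerivAt_quintic (x : ℝ) :
    HasDerivAt (fun l => l - 5 * a * l ^ 3 + 10 * a ^ 2 * l ^ 5)
      (1 - 15 * a * x ^ 2 + 50 * a ^ 2 * x ^ 4) x := by
  refine (((hasDerivAt_id' x).fun_sub ((hasDerivAt_pow 3 x).const_mul (5 * a))).fun_add
    ((hasDerivAt_pow 5 x).const_mul (10 * a ^ 2))).congr_deriv ?_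
  push_cast
  ring

variable {a}

theorem quintic_deriv_le_one (ha : 0 ≤ a) {x : ℝ} (hx : 10 * a * x ^ 2 ≤ 3) :
    1 - 15 * a * x ^ 2 + 50 * a ^ 2 * x ^ 4 ≤ 1 := by
  nlinarith [mul_nonneg ha (sq_nonneg x)]

theorem quintic_eq_of_mul_sq_eq {c : ℝ} (hc : a * c ^ 2 = 1 / 5) :
    c - 5 * a * c ^ 3 + 10 * a ^ 2 * c ^ 5 = 2 / 5 * c := by
  linear_combination (10 * a * c ^ 3 - 3 * c) * hc

theorem deriv_le_one_of_eqOn_quintic {ρ : ℝ → ℝ} {c : ℝ} (ha : 0 ≤ a)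
    (hc : 10 * a * c ^ 2 ≤ 3)
    (hρ : ∀ l ∈ Icc 0 c, ρ l = l - 5 * a * l ^ 3 + 10 * a ^ 2 * l ^ 5) :
    ∀ x ∈ Ioo 0 c, deriv ρ x ≤ 1 := fun x hx => by
  rw [((hasDerivAt_quintic a x).congr_of_eventuallyEq
    (Filter.eventually_of_mem (Icc_mem_nhds hx.1 hx.2) hρ)).deriv]
  exact quintic_deriv_le_one ha (by nlinarith [pow_lt_pow_left₀ hx.2 hx.1.le two_ne_zero])

end Quintic

section Constants

variable {a : ℝ}

theorem mul_sq_one_div_sqrt (ha : 0 < a) : a * (1 / Real.sqrt (5 * a)) ^ 2 = 1 / 5 := by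
  rw [div_pow, Real.sq_sqrt (by positivity)]
  field_simp

theorem one_div_sqrt_five_mul_lt (ha : 0 < a) :
    1 / Real.sqrt (5 * a) < 1 / (2 * Real.sqrt a) := by
  rw [Real.sqrt_mul (by norm_num), div_lt_div_iff_of_pos_left one_pos (by positivity)
    (by positivity)]
  have : 2 < Real.sqrt 5 := (Real.lt_sqrt (by norm_num)).mpr (by norm_num)
  nlinarith [Real.sqrt_pos.mpr ha]

theorem one_div_two_sqrt_sub_lt (ha : 0 < a) :
    1 / (2 * Real.sqrt a) - 2 / 5 * (1 / Real.sqrt (5 * a)) < 1 / (3 * Real.sqrt a) := by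
  have ht := Real.sqrt_pos.mpr ha
  have h5 : Real.sqrt 5 < 12 / 5 := (Real.sqrt_lt' (by norm_num)).mpr (by norm_num)
  rw [Real.sqrt_mul (by norm_num)]
  field_simp
  nlinarith [Real.sqrt_pos.mpr (show (0 : ℝ) < 5 by norm_num)]

end Constants

theorem stmt15_general (a : ℝ) (ha : 0 < a) (ρ : ℝ → ℝ)
    (hdiff : Differentiable ℝ ρ)
    (hpoly : ∀ l ∈ Set.Icc (0 : ℝ) (1 / Real.sqrt (5 * a)),
      ρ l = l - 5 * a * l ^ 3 + 10 * a ^ 2 * l ^ 5)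
    (hmid : ∀ l ∈ Set.Ioo (1 / Real.sqrt (5 * a)) (1 / (2 * Real.sqrt a)),
      0 < deriv ρ l ∧ deriv ρ l ≤ 1)
    (hflat : ∀ l : ℝ, 1 / (2 * Real.sqrt a) ≤ l → deriv ρ l = 1) :
    ∀ s : ℝ, 0 ≤ s → s - ρ s < 1 / (3 * Real.sqrt a) := by
  set c := 1 / Real.sqrt (5 * a)
  set b := 1 / (2 * Real.sqrt a)
  have hc : 0 ≤ c := by positivity
  have hac : a * c ^ 2 = 1 / 5 := mul_sq_one_div_sqrt ha
  have hcb : c ≤ b := (one_div_sqrt_five_mul_lt ha).le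
  have hcont (D : Set ℝ) : ContinuousOn ρ D := hdiff.continuous.continuousOn
  have hpoly_mono : MonotoneOn (fun x => x - ρ x) (Icc 0 c) :=
    monotoneOn_id_sub_of_deriv_le_one (convex_Icc 0 c) (hcont _) hdiff.differentiableOn
      (by simpa only [interior_Icc] using deriv_le_one_of_eqOn_quintic ha.le (by linarith) hpoly)
  have hmid_mono : MonotoneOn (fun x => x - ρ x) (Icc c b) :=
    monotoneOn_id_sub_of_deriv_le_one (convex_Icc c b) (hcont _) hdiff.differentiableOn
      (by simpa only [interior_Icc] using fun x hx => (hmid x hx).2)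
  have hflat_anti : AntitoneOn (fun x => x - ρ x) (Ici b) :=
    antitoneOn_id_sub_of_one_le_deriv (convex_Ici b) (hcont _) hdiff.differentiableOn
      fun x hx => (hflat x (interior_subset hx)).ge
  have hρcb : ρ c ≤ ρ b :=
    monotoneOn_of_deriv_nonneg (convex_Icc c b) (hcont _) hdiff.differentiableOn
      (by simpa only [interior_Icc] using fun x hx => (hmid x hx).1.le)
      ⟨le_rfl, hcb⟩ ⟨hcb, le_rfl⟩ hcb
  have hρc : ρ c = 2 / 5 * c := (hpoly c ⟨hc, le_rfl⟩).trans (quintic_eq_of_mul_sq_eq hac)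
  have hmono : MonotoneOn (fun x => x - ρ x) (Icc 0 b) := by
    rw [← Icc_union_Icc_eq_Icc hc hcb]
    exact hpoly_mono.union_right hmid_mono (isGreatest_Icc hc) (isLeast_Icc hcb)
  have hmax := isMaxOn_Ici_of_monotoneOn_Icc_of_antitoneOn_Ici (hc.trans hcb) hmono hflat_anti
  intro s hs
  calc s - ρ s ≤ b - ρ b := hmax hs
    _ ≤ b - 2 / 5 * c := by linarith
    _ < 1 / (3 * Real.sqrt a) := one_div_two_sqrt_sub_lt ha

/-- For `ρ` equal to `l - 5al³ + 10a²l⁵` on `[0, 1/√(5a)]`, with `ρ' ∈ (0,1]`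
on `(1/√(5a), 1/(2√a))`, `ρ' = 1` for `l ≥ 1/(2√a)`, and `ρ(l) ≤ l` for
`l ≥ 0`, one has `sup_{s ≥ 0} (s - ρ(s)) < 1/(3√a)`. -/
theorem stmt15 (a : ℝ) (ha : 0 < a) (ρ : ℝ → ℝ)
    (hdiff : Differentiable ℝ ρ)
    (hpoly : ∀ l ∈ Set.Icc (0 : ℝ) (1 / Real.sqrt (5 * a)),
      ρ l = l - 5 * a * l ^ 3 + 10 * a ^ 2 * l ^ 5)
    (hmid : ∀ l ∈ Set.Ioo (1 / Real.sqrt (5 * a)) (1 / (2 * Real.sqrt a)),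
      0 < deriv ρ l ∧ deriv ρ l ≤ 1)
    (hflat : ∀ l : ℝ, 1 / (2 * Real.sqrt a) ≤ l → deriv ρ l = 1)
    (hle : ∀ l : ℝ, 0 ≤ l → ρ l ≤ l) :
    ∀ s : ℝ, 0 ≤ s → s - ρ s < 1 / (3 * Real.sqrt a) :=
  stmt15_general a ha ρ hdiff hpoly hmid hflat
end

section
/- For a > 0 and ρ as in the construction (ρ(l) = l - 5al³ + 10a²l⁵ on [0, 1/√(5a)], s - ρ(s) < 1/(3√a) for all s, ρ' = 1 for l ≥ 1/(2√a)), the radius r₂ = r(1/(2√a)) of the support of the perturbation satisfies ln r₂ - ln(1/(2√a)) = ∫₀^{1/(2√a)} (1/ρ(s) - 1/s) ds ≤ 2 - ln(3-√5); consequently r₂ ≤ (2√a)⁻¹·e²/(3-√5), so r₂ → 0 as a → ∞. -/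
/-!
On `(0, b]` the function `log r(l) - log l` is an antiderivative of `1/ρ - 1/l`, and by
`r(l)/l → 1` it tends to `0` at `0⁺`; since the integrand is integrable up to `0`, the improper
fundamental theorem of calculus gives the identity. For the bound, split `[0, b]` at
`L = 1/√(5a)`, with `b = 1/(2√a)`. On `[0, L]` the integrand equals
`(5as - 10a²s³)/(1 - 5as² + 10a²s⁴) ≤ 40as/3` because the quartic is at least `3/8`, and this
integrates to `4/3 ≤ 2`. On `[L, b]` the gap `s - ρ(s) < c = 1/(3√a)` gives
`1/ρ(s) - 1/s ≤ 1/(s - c) - 1/s`, whose integral `log(1 - c/b) - log(1 - c/L)` equals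
`-log(3 - √5)`.
-/

open MeasureTheory Real Filter Set Topology

theorem hasDerivAt_log_sub_log {r ρ : ℝ → ℝ} {l : ℝ} (hl : l ≠ 0) (hr : 0 < r l)
    (hrode : HasDerivAt r (r l / ρ l) l) :
    HasDerivAt (fun x => log (r x) - log x) (1 / ρ l - 1 / l) l := by
  refine ((hrode.log hr.ne').sub (hasDerivAt_log hl)).congr_deriv ?_
  rw [div_div_cancel_left' hr.ne', one_div, one_div]

theorem log_sub_log_eq_integral {r ρ : ℝ → ℝ} {b : ℝ} (hb : 0 < b)
    (hrpos : ∀ l ∈ Ioc 0 b, 0 < r l) (hrode : ∀ l ∈ Ioc 0 b, HasDerivAt r (r l / ρ l) l)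
    (hrlim : Tendsto (fun l => r l / l) (𝓝[>] 0) (𝓝 1))
    (hint : IntervalIntegrable (fun s => 1 / ρ s - 1 / s) volume 0 b) :
    log (r b) - log b = ∫ s in (0 : ℝ)..b, (1 / ρ s - 1 / s) := by
  have hderiv : ∀ l ∈ Ioc 0 b, HasDerivAt (fun x => log (r x) - log x) (1 / ρ l - 1 / l) l :=
    fun l hl => hasDerivAt_log_sub_log hl.1.ne' (hrpos l hl) (hrode l hl)
  have hlim0 : Tendsto (fun l => log (r l) - log l) (𝓝[>] 0) (𝓝 0) := by
    have := (continuousAt_log one_ne_zero).tendsto.comp hrlim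
    rw [log_one] at this
    refine this.congr' ?_
    filter_upwards [Ioo_mem_nhdsGT hb] with l hl
    exact log_div (hrpos l (Ioo_subset_Ioc_self hl)).ne' hl.1.ne'
  have hlimb := (hderiv b ⟨hb, le_rfl⟩).continuousAt.continuousWithinAt (s := Iio b)
  rw [intervalIntegral.integral_eq_sub_of_hasDerivAt_of_tendsto hb
    (fun l hl => hderiv l (Ioo_subset_Ioc_self hl)) hint hlim0 hlimb.tendsto, sub_zero]

theorem three_div_eight_le_quartic (a s : ℝ) :
    3 / 8 ≤ 1 - 5 * a * s ^ 2 + 10 * a ^ 2 * s ^ 4 := by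
  nlinarith [sq_nonneg (a * s ^ 2 - 1 / 4)]

/-- Both sides vanish at `s = 0`, where `1 / 0 = 0`. -/
theorem one_div_quintic_sub_one_div (a s : ℝ) :
    1 / (s - 5 * a * s ^ 3 + 10 * a ^ 2 * s ^ 5) - 1 / s
      = (5 * a * s - 10 * a ^ 2 * s ^ 3) / (1 - 5 * a * s ^ 2 + 10 * a ^ 2 * s ^ 4) := by
  rcases eq_or_ne s 0 with rfl | hs
  · simp
  have hq : 1 - 5 * a * s ^ 2 + 10 * a ^ 2 * s ^ 4 ≠ 0 :=
    (lt_of_lt_of_le (by norm_num) (three_div_eight_le_quartic a s)).ne'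
  rw [show s - 5 * a * s ^ 3 + 10 * a ^ 2 * s ^ 5 = s * (1 - 5 * a * s ^ 2 + 10 * a ^ 2 * s ^ 4)
    by ring, div_sub_div _ _ (mul_ne_zero hs hq) hs,
    div_eq_div_iff (mul_ne_zero (mul_ne_zero hs hq) hs) hq]
  ring

theorem continuous_quintic_correction (a : ℝ) :
    Continuous fun s : ℝ =>
      (5 * a * s - 10 * a ^ 2 * s ^ 3) / (1 - 5 * a * s ^ 2 + 10 * a ^ 2 * s ^ 4) := by
  refine (by fun_prop : Continuous _).div (by fun_prop) fun s => ?_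
  exact (lt_of_lt_of_le (by norm_num) (three_div_eight_le_quartic a s)).ne'

theorem quintic_correction_le {a s : ℝ} (ha : 0 ≤ a) (hs : 0 ≤ s) :
    (5 * a * s - 10 * a ^ 2 * s ^ 3) / (1 - 5 * a * s ^ 2 + 10 * a ^ 2 * s ^ 4)
      ≤ 40 * a / 3 * s := by
  have hq := three_div_eight_le_quartic a s
  rw [div_le_iff₀ (by linarith)]
  nlinarith [mul_nonneg ha hs, mul_nonneg (mul_nonneg ha hs) (sq_nonneg (a * s ^ 2)),
    pow_nonneg hs 3, mul_nonneg (sq_nonneg a) (pow_nonneg hs 3)]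

theorem eqOn_one_div_sub_one_div_quintic {ρ : ℝ → ℝ} {a L : ℝ}
    (hpoly : ∀ l ∈ Icc 0 L, ρ l = l - 5 * a * l ^ 3 + 10 * a ^ 2 * l ^ 5) :
    EqOn (fun s => 1 / ρ s - 1 / s)
      (fun s => (5 * a * s - 10 * a ^ 2 * s ^ 3) / (1 - 5 * a * s ^ 2 + 10 * a ^ 2 * s ^ 4))
      (Icc 0 L) := fun s hs => by
  simp only [hpoly s hs, one_div_quintic_sub_one_div]

theorem intervalIntegrable_one_div_sub_one_div_of_sub_le {ρ : ℝ → ℝ} {c L b : ℝ} (hc : 0 < c)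
    (hcL : c < L) (hLb : L ≤ b) (hρ : ContinuousOn ρ (Icc L b))
    (hgap : ∀ s ∈ Icc L b, s - ρ s ≤ c) :
    IntervalIntegrable (fun s => 1 / ρ s - 1 / s) volume L b := by
  refine ContinuousOn.intervalIntegrable ?_
  rw [uIcc_of_le hLb]
  refine (continuousOn_const.div hρ fun s hs => ?_).sub
    (continuousOn_const.div continuousOn_id fun s hs => ?_)
  · linarith [hgap s hs, hs.1]
  · linarith [hs.1]

theorem integral_one_div_sub_sub_one_div {c L b : ℝ} (hc : 0 < c) (hcL : c < L) (hLb : L ≤ b) :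
    ∫ s in L..b, (1 / (s - c) - 1 / s) = log (1 - c / b) - log (1 - c / L) := by
  have hL : 0 < L := hc.trans hcL
  have hb : 0 < b := hL.trans_le hLb
  have hLc : 0 < L - c := sub_pos.mpr hcL
  have hbc : 0 < b - c := by linarith
  have hpos : ∀ s ∈ uIcc L b, 0 < s - c := fun s hs => by
    rw [uIcc_of_le hLb] at hs
    linarith [hs.1]
  have hsub : IntervalIntegrable (fun s => 1 / (s - c)) volume L b :=
    intervalIntegral.intervalIntegrable_one_div (fun s hs => (hpos s hs).ne') (by fun_prop)
  have hid : IntervalIntegrable (fun s => 1 / s) volume L b :=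
    intervalIntegral.intervalIntegrable_one_div (fun s hs => by linarith [hpos s hs])
      continuousOn_id
  rw [intervalIntegral.integral_sub hsub hid,
    intervalIntegral.integral_comp_sub_right (fun x => 1 / x), integral_one_div_of_pos hLc hbc,
    integral_one_div_of_pos hL hb, one_sub_div hb.ne', one_sub_div hL.ne',
    log_div hbc.ne' hLc.ne', log_div hb.ne' hL.ne', log_div hbc.ne' hb.ne', log_div hLc.ne' hL.ne']
  ring

theorem integral_one_div_sub_one_div_le_of_sub_le {ρ : ℝ → ℝ} {c L b : ℝ} (hc : 0 < c)
    (hcL : c < L) (hLb : L ≤ b) (hρ : ContinuousOn ρ (Icc L b))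
    (hgap : ∀ s ∈ Icc L b, s - ρ s ≤ c) :
    ∫ s in L..b, (1 / ρ s - 1 / s) ≤ log (1 - c / b) - log (1 - c / L) := by
  rw [← integral_one_div_sub_sub_one_div hc hcL hLb]
  refine intervalIntegral.integral_mono_on hLb
    (intervalIntegrable_one_div_sub_one_div_of_sub_le hc hcL hLb hρ hgap)
    (intervalIntegrable_one_div_sub_one_div_of_sub_le hc hcL hLb (by fun_prop)
      fun s _ => by rw [sub_sub_cancel]) fun s hs => ?_
  have hsc : 0 < s - c := by linarith [hs.1]
  exact sub_le_sub_right (one_div_le_one_div_of_le hsc (by linarith [hgap s hs])) _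

theorem le_mul_exp_of_log_sub_log_le {x y d : ℝ} (hx : 0 < x) (hy : 0 < y)
    (h : log x - log y ≤ d) : x ≤ y * exp d := by
  rw [← log_le_log_iff hx (by positivity), log_mul hy.ne' (exp_pos d).ne', log_exp]
  linarith

theorem sqrt_five_lt_three : √5 < 3 := by
  rw [sqrt_lt' (by norm_num)]; norm_num

section

variable {a : ℝ}

theorem integral_quintic_correction_le (ha : 0 < a) :
    ∫ s in (0 : ℝ)..1 / √(5 * a),
      (5 * a * s - 10 * a ^ 2 * s ^ 3) / (1 - 5 * a * s ^ 2 + 10 * a ^ 2 * s ^ 4) ≤ 4 / 3 := by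
  have hL : 0 ≤ 1 / √(5 * a) := by positivity
  calc _ ≤ ∫ s in (0 : ℝ)..1 / √(5 * a), 40 * a / 3 * s :=
        intervalIntegral.integral_mono_on hL
          ((continuous_quintic_correction a).intervalIntegrable _ _)
          ((continuous_const_mul (40 * a / 3)).intervalIntegrable _ _)
          fun s hs => quintic_correction_le ha.le hs.1
    _ = 4 / 3 := by
        rw [intervalIntegral.integral_const_mul, integral_id, div_pow, sq_sqrt (by positivity)]
        field_simp
        ring

theorem one_div_three_mul_sqrt_lt_one_div_sqrt_five_mul (ha : 0 < a) :
    1 / (3 * √a) < 1 / √(5 * a) := by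
  rw [sqrt_mul (by norm_num)]
  gcongr
  exact sqrt_five_lt_three

theorem one_div_sqrt_five_mul_le_one_div_two_mul_sqrt (ha : 0 < a) :
    1 / √(5 * a) ≤ 1 / (2 * √a) := by
  rw [sqrt_mul (by norm_num)]
  gcongr
  rw [le_sqrt (by norm_num) (by norm_num)]; norm_num

theorem log_one_sub_div_sub_log_one_sub_div (ha : 0 < a) :
    log (1 - 1 / (3 * √a) / (1 / (2 * √a))) - log (1 - 1 / (3 * √a) / (1 / √(5 * a)))
      = -log (3 - √5) := by
  rw [sqrt_mul (by norm_num),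
    show 1 - 1 / (3 * √a) / (1 / (2 * √a)) = 1 / 3 by field_simp; norm_num,
    show 1 - 1 / (3 * √a) / (1 / (√5 * √a)) = (3 - √5) / 3 by field_simp,
    log_div (x := 3 - √5) (sub_pos.mpr sqrt_five_lt_three).ne' (by norm_num), log_div one_ne_zero (by norm_num), log_one]
  ring

end

theorem stmt16_general (a : ℝ) (ha : 0 < a) (ρ r : ℝ → ℝ)
    (hρcont : Continuous ρ)
    (hpoly : ∀ l ∈ Set.Icc (0 : ℝ) (1 / Real.sqrt (5 * a)),
      ρ l = l - 5 * a * l ^ 3 + 10 * a ^ 2 * l ^ 5)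
    (hgap : ∀ s : ℝ, 0 ≤ s → s - ρ s < 1 / (3 * Real.sqrt a))
    (hrpos : ∀ l : ℝ, 0 < l → 0 < r l)
    (hrode : ∀ l : ℝ, 0 < l → HasDerivAt r (r l / ρ l) l)
    (hrlim : Filter.Tendsto (fun l => r l / l) (nhdsWithin 0 (Set.Ioi 0)) (nhds 1)) :
    Real.log (r (1 / (2 * Real.sqrt a))) - Real.log (1 / (2 * Real.sqrt a))
        = ∫ s in (0 : ℝ)..(1 / (2 * Real.sqrt a)), (1 / ρ s - 1 / s) ∧
    (∫ s in (0 : ℝ)..(1 / (2 * Real.sqrt a)), (1 / ρ s - 1 / s))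
        ≤ 2 - Real.log (3 - Real.sqrt 5) ∧
    r (1 / (2 * Real.sqrt a))
        ≤ (1 / (2 * Real.sqrt a)) * Real.exp 2 / (3 - Real.sqrt 5) := by
  have hc : 0 < 1 / (3 * √a) := by positivity
  have hcL := one_div_three_mul_sqrt_lt_one_div_sqrt_five_mul ha
  have hLb := one_div_sqrt_five_mul_le_one_div_two_mul_sqrt ha
  have hb : 0 < 1 / (2 * √a) := hc.trans (hcL.trans_le hLb)
  have hgap' : ∀ s ∈ Icc (1 / √(5 * a)) (1 / (2 * √a)), s - ρ s ≤ 1 / (3 * √a) :=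
    fun s hs => (hgap s (hc.trans (hcL.trans_le hs.1)).le).le
  have heqOn := uIcc_of_le (hc.trans hcL).le ▸ eqOn_one_div_sub_one_div_quintic hpoly
  have hint₁ : IntervalIntegrable (fun s => 1 / ρ s - 1 / s) volume 0 (1 / √(5 * a)) :=
    ((continuous_quintic_correction a).continuousOn.congr heqOn).intervalIntegrable
  have hint₂ := intervalIntegrable_one_div_sub_one_div_of_sub_le hc hcL hLb
    hρcont.continuousOn hgap'
  have hle : ∫ s in (0 : ℝ)..1 / (2 * √a), (1 / ρ s - 1 / s) ≤ 2 - log (3 - √5) := by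
    rw [← intervalIntegral.integral_add_adjacent_intervals hint₁ hint₂,
      intervalIntegral.integral_congr heqOn]
    linarith [integral_quintic_correction_le ha, log_one_sub_div_sub_log_one_sub_div ha,
      integral_one_div_sub_one_div_le_of_sub_le hc hcL hLb hρcont.continuousOn hgap']
  have heq := log_sub_log_eq_integral hb (fun l hl => hrpos l hl.1) (fun l hl => hrode l hl.1)
    hrlim (hint₁.trans hint₂)
  refine ⟨heq, hle, ?_⟩
  calc r (1 / (2 * √a)) ≤ 1 / (2 * √a) * exp (2 - log (3 - √5)) :=
        le_mul_exp_of_log_sub_log_le (hrpos _ hb) hb (heq ▸ hle)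
    _ = _ := by
        rw [exp_sub, exp_log (sub_pos.mpr sqrt_five_lt_three)]
        ring

/-- For the solution `r` of `dr/dl = r/ρ` with `r(l)/l → 1` as `l → 0⁺`, the
radius `r₂ = r(1/(2√a))` of the support of the perturbation satisfies
`ln r₂ - ln(1/(2√a)) = ∫₀^{1/(2√a)} (1/ρ(s) - 1/s) ds ≤ 2 - ln(3-√5)`, hence
`r₂ ≤ (2√a)⁻¹ e²/(3-√5)` (so `r₂ → 0` as `a → ∞`). -/
theorem stmt16 (a : ℝ) (ha : 0 < a) (ρ r : ℝ → ℝ)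
    (hρcont : Continuous ρ)
    (hpoly : ∀ l ∈ Set.Icc (0 : ℝ) (1 / Real.sqrt (5 * a)),
      ρ l = l - 5 * a * l ^ 3 + 10 * a ^ 2 * l ^ 5)
    (hρpos : ∀ s : ℝ, 0 < s → 0 < ρ s)
    (hρle : ∀ s : ℝ, 0 ≤ s → ρ s ≤ s)
    (hgap : ∀ s : ℝ, 0 ≤ s → s - ρ s < 1 / (3 * Real.sqrt a))
    (hrpos : ∀ l : ℝ, 0 < l → 0 < r l)
    (hrode : ∀ l : ℝ, 0 < l → HasDerivAt r (r l / ρ l) l)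
    (hrlim : Filter.Tendsto (fun l => r l / l) (nhdsWithin 0 (Set.Ioi 0)) (nhds 1)) :
    Real.log (r (1 / (2 * Real.sqrt a))) - Real.log (1 / (2 * Real.sqrt a))
        = ∫ s in (0 : ℝ)..(1 / (2 * Real.sqrt a)), (1 / ρ s - 1 / s) ∧
    (∫ s in (0 : ℝ)..(1 / (2 * Real.sqrt a)), (1 / ρ s - 1 / s))
        ≤ 2 - Real.log (3 - Real.sqrt 5) ∧
    r (1 / (2 * Real.sqrt a))
        ≤ (1 / (2 * Real.sqrt a)) * Real.exp 2 / (3 - Real.sqrt 5) :=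
  stmt16_general a ha ρ r hρcont hpoly hgap hrpos hrode hrlim
end
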